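/- arXiv:1307.0239 — 5 statements merged into one kernel-verified Lean document; each statement's English description precedes it below -/
import Mathlib

section
/- (Liberality of the test based on the lower p-value.) Let s ≥ 1 and let R_1, …, R_{s+1} be exchangeable real-valued random variables (ties permitted), and let m be an integer with 0 ≤ m ≤ s. Then P(#{i ∈ {1, …, s+1} : R_i < R_1} ≤ m) > m/(s+1). In particular, if α(s+1) = m is an integer with α < 1, then the test φ_lib = 1(p_- ≤ α), where p_- = #{i : R_i < R_1}/(s+1), rejects with probability strictly greater than α under the null hypothesis. -/
open MeasureTheory
open scoped ENNReal

/-! For every outcome, the `m + 1` smallest coordinates of `R ω` (sorted, ties broken arbitrarily)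
each have at most `m` coordinates strictly below them, so at least `m + 1` of the events
`A j = {#{i | R i < R j} ≤ m}` occur. By exchangeability all `A j` have the same probability,
hence `(s + 1) P(A 0) ≥ m + 1`, i.e. `P(A 0) ≥ (m + 1)/(s + 1) > m/(s + 1)`. -/

section CountBelow

variable {ι α : Type*}

noncomputable def countBelow [LT α] (x : ι → α) (j : ι) : ℕ :=
  {i | x i < x j}.ncard

theorem countBelow_comp_perm [LT α] (x : ι → α) (σ : Equiv.Perm ι) (j : ι) :
    countBelow (x ∘ σ) j = countBelow x (σ j) :=
  Set.ncard_preimage_of_injective_subset_range (s := {i | x i < x (σ j)}) σ.injective (by simp)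

variable [LinearOrder α]

theorem countBelow_le_of_monotone {n : ℕ} {x : Fin n → α} (hx : Monotone x) (k : Fin n) :
    countBelow x k ≤ k := by
  have hsub : {i | x i < x k} ⊆ Set.Iio k := fun i hi =>
    lt_of_not_ge fun hki => (hx hki).not_gt hi
  calc countBelow x k ≤ (Set.Iio k).ncard := Set.ncard_le_ncard hsub
    _ = k := by simp [Set.ncard_eq_toFinset_card']

theorem le_ncard_setOf_countBelow_le {n m : ℕ} (x : Fin n → α) (hm : m < n) :
    m + 1 ≤ {j | countBelow x j ≤ m}.ncard := by
  set σ := Tuple.sort x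
  calc m + 1 = (Set.Iic (⟨m, hm⟩ : Fin n)).ncard := by simp [Set.ncard_eq_toFinset_card']
    _ ≤ (σ ⁻¹' {j | countBelow x j ≤ m}).ncard := Set.ncard_le_ncard fun k (hk : k ≤ _) => by
        rw [Set.mem_preimage, Set.mem_ofPred_eq, ← countBelow_comp_perm]
        exact (countBelow_le_of_monotone (Tuple.monotone_sort x) k).trans hk
    _ = {j | countBelow x j ≤ m}.ncard :=
        Set.ncard_preimage_of_injective_subset_range σ.injective (by simp)

variable [TopologicalSpace α] [OrderClosedTopology α] [SecondCountableTopology α]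
  [MeasurableSpace α] [OpensMeasurableSpace α]

theorem measurable_countBelow [Countable ι] (j : ι) :
    Measurable fun x : ι → α => countBelow x j :=
  measurable_ncard.comp <| measurable_set_iff.2 fun i =>
    measurableSet_setOfPred.1 (measurableSet_lt (measurable_pi_apply i) (measurable_pi_apply j))

end CountBelow

section Exchangeable

variable {Ω ι α : Type*} [MeasurableSpace Ω] [MeasurableSpace α]

def Exchangeable (X : ι → Ω → α) (P : Measure Ω) : Prop :=
  ∀ σ : Equiv.Perm ι, P.map (fun ω i => X (σ i) ω) = P.map (fun ω i => X i ω)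

theorem Exchangeable.measure_preimage_comp_perm {X : ι → Ω → α} {P : Measure Ω}
    (hX : Exchangeable X P) (hmeas : ∀ i, Measurable (X i)) (σ : Equiv.Perm ι)
    {S : Set (ι → α)} (hS : MeasurableSet S) :
    P ((fun ω i => X (σ i) ω) ⁻¹' S) = P ((fun ω i => X i ω) ⁻¹' S) := by
  rw [← Measure.map_apply (by fun_prop) hS, ← Measure.map_apply (by fun_prop) hS, hX σ]

variable [LinearOrder α] [TopologicalSpace α] [OrderClosedTopology α] [SecondCountableTopology α]
  [OpensMeasurableSpace α] [Countable ι]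

theorem Exchangeable.measure_countBelow_le_eq {X : ι → Ω → α} {P : Measure Ω}
    (hX : Exchangeable X P) (hmeas : ∀ i, Measurable (X i)) (j k : ι) (m : ℕ) :
    P {ω | countBelow (X · ω) j ≤ m} = P {ω | countBelow (X · ω) k ≤ m} := by
  classical
  have hS : MeasurableSet {x : ι → α | countBelow x k ≤ m} :=
    measurableSet_le (measurable_countBelow k) measurable_const
  have hpre : {ω | countBelow (X · ω) j ≤ m} =
      (fun ω i => X (Equiv.swap k j i) ω) ⁻¹' {x | countBelow x k ≤ m} := by
    ext ω
    show countBelow (X · ω) j ≤ m ↔ countBelow ((X · ω) ∘ Equiv.swap k j) k ≤ m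
    rw [countBelow_comp_perm, Equiv.swap_apply_left]
  rw [hpre, hX.measure_preimage_comp_perm hmeas _ hS]
  rfl

end Exchangeable

theorem le_sum_measure_of_le_ncard {Ω ι : Type*} [MeasurableSpace Ω] [Fintype ι]
    {μ : Measure Ω} {A : ι → Set Ω} (hA : ∀ j, MeasurableSet (A j)) {k : ℕ}
    (hk : ∀ ω, k ≤ {j | ω ∈ A j}.ncard) :
    k * μ Set.univ ≤ ∑ j, μ (A j) := by
  have hcount (ω : Ω) : ∑ j, (A j).indicator 1 ω = ({j | ω ∈ A j}.ncard : ℝ≥0∞) := by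
    classical
    simp [Set.indicator_apply, Finset.sum_boole, Set.ncard_eq_toFinset_card']
  calc k * μ Set.univ = ∫⁻ _, (k : ℝ≥0∞) ∂μ := (lintegral_const _).symm
    _ ≤ ∫⁻ ω, ∑ j, (A j).indicator 1 ω ∂μ :=
        lintegral_mono fun ω => (hcount ω).symm ▸ Nat.cast_le.2 (hk ω)
    _ = ∑ j, μ (A j) := by
        rw [lintegral_finsetSum _ fun j _ => measurable_one.indicator (hA j)]
        simp_rw [lintegral_indicator_one (hA _)]

theorem lower_p_value_test_liberal_general
    {Ω : Type*} [MeasurableSpace Ω] (P : Measure Ω) [IsProbabilityMeasure P]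
    (s : ℕ) (R : Fin (s + 1) → Ω → ℝ)
    (hmeas : ∀ i, Measurable (R i))
    (hexch : ∀ σ : Equiv.Perm (Fin (s + 1)),
      Measure.map (fun ω (i : Fin (s + 1)) => R (σ i) ω) P =
        Measure.map (fun ω (i : Fin (s + 1)) => R i ω) P)
    (m : ℕ) (hm : m ≤ s) :
    P {ω | {i : Fin (s + 1) | R i ω < R 0 ω}.ncard ≤ m} > (m : ℝ≥0∞) / (s + 1) := by
  set A : Fin (s + 1) → Set Ω := fun j => {ω | countBelow (R · ω) j ≤ m}
  have hA (j) : MeasurableSet (A j) :=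
    measurableSet_le ((measurable_countBelow j).comp (measurable_pi_lambda _ hmeas))
      measurable_const
  have hAeq (j) : P (A j) = P (A 0) :=
    Exchangeable.measure_countBelow_le_eq hexch hmeas j 0 m
  have hsum : (m + 1 : ℕ) * P Set.univ ≤ ∑ j, P (A j) :=
    le_sum_measure_of_le_ncard hA fun ω => le_ncard_setOf_countBelow_le _ (by omega)
  simp only [hAeq, measure_univ, mul_one, Finset.sum_const, Finset.card_univ, Fintype.card_fin,
    nsmul_eq_mul] at hsum
  push_cast at hsum
  rw [gt_iff_lt, ENNReal.div_lt_iff (by simp) (by simp)]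
  calc (m : ℝ≥0∞) < m + 1 := ENNReal.lt_add_right (by simp) one_ne_zero
    _ ≤ (s + 1) * P (A 0) := hsum
    _ = P (A 0) * (s + 1) := mul_comm _ _

/-- **Liberality of the test based on the lower p-value.**
Let `s ≥ 1` and let `R 0, …, R s` (i.e. `R_1, …, R_{s+1}`) be exchangeable real-valued
random variables (ties permitted), and let `m` be an integer with `0 ≤ m ≤ s`. Then
`P(#{i : R i < R 0} ≤ m) > m/(s+1)`. In particular, if `α(s+1) = m` is an integer with
`α < 1`, the test `φ_lib = 1(p_- ≤ α)`, where `p_- = #{i : R i < R 0}/(s+1)`, rejects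
with probability strictly greater than `α` under the null hypothesis. -/
theorem lower_p_value_test_liberal
    {Ω : Type*} [MeasurableSpace Ω] (P : Measure Ω) [IsProbabilityMeasure P]
    (s : ℕ) (hs : 1 ≤ s) (R : Fin (s + 1) → Ω → ℝ)
    (hmeas : ∀ i, Measurable (R i))
    (hexch : ∀ σ : Equiv.Perm (Fin (s + 1)),
      Measure.map (fun ω (i : Fin (s + 1)) => R (σ i) ω) P =
        Measure.map (fun ω (i : Fin (s + 1)) => R i ω) P)
    (m : ℕ) (hm : m ≤ s) :
    P {ω | {i : Fin (s + 1) | R i ω < R 0 ω}.ncard ≤ m} > (m : ℝ≥0∞) / (s + 1) :=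
  lower_p_value_test_liberal_general P s R hmeas hexch m hm
end

section
/- (Conservativeness of the test based on the upper p-value.) Let s ≥ 1 and let R_1, …, R_{s+1} be exchangeable real-valued random variables (ties permitted), and let m be any natural number. Then P(#{i ∈ {1, …, s+1} : R_i ≤ R_1} ≤ m) ≤ m/(s+1). In particular, if α(s+1) = m is an integer, then the test φ_cons = 1(p_+ ≤ α), where p_+ = #{i : R_i ≤ R_1}/(s+1), rejects with probability at most α under the null hypothesis. -/
/-!
At every outcome, at most `m` indices `j` satisfy `#{i | R i ≤ R j} ≤ m`: the one among them
with the largest value has all of them in its own count. So the indicators of the `s + 1`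
events `{#{i | R i ≤ R j} ≤ m}` sum to at most `m`, while exchangeability gives all of them
the probability of the event for `j = 0`.
-/

open MeasureTheory Finset
open scoped ENNReal

section RankCount

variable {ι α : Type*} [Fintype ι] [LinearOrder α]

def rankCount (x : ι → α) (j : ι) : ℕ :=
  #{i | x i ≤ x j}

theorem card_rankCount_le_le (x : ι → α) (m : ℕ) : #{j | rankCount x j ≤ m} ≤ m := by
  obtain hempty | hne := (univ.filter fun j => rankCount x j ≤ m).eq_empty_or_nonempty
  · simp [hempty]
  obtain ⟨j, hj, hmax⟩ := exists_max_image _ x hne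
  calc #{j | rankCount x j ≤ m} ≤ rankCount x j :=
        card_le_card fun k hk => mem_filter.mpr ⟨mem_univ k, hmax k hk⟩
    _ ≤ m := (mem_filter.mp hj).2

theorem rankCount_comp_perm (x : ι → α) (σ : Equiv.Perm ι) (j : ι) :
    rankCount (x ∘ σ) j = rankCount x (σ j) :=
  card_equiv σ (by simp)

theorem measurableSet_setOf_rankCount_le [MeasurableSpace α] [TopologicalSpace α]
    [OpensMeasurableSpace α] [OrderClosedTopology α] [SecondCountableTopology α]
    (j : ι) (m : ℕ) : MeasurableSet {x : ι → α | rankCount x j ≤ m} := by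
  have hmeas : Measurable fun x : ι → α => rankCount x j := by
    simp only [rankCount, card_filter]
    exact Finset.measurable_sum _ fun i _ =>
      Measurable.ite (measurableSet_le (measurable_pi_apply i) (measurable_pi_apply j))
        measurable_const measurable_const
  exact hmeas measurableSet_Iic

end RankCount

theorem sum_measure_le_of_forall_card_le {ι Ω : Type*} [Fintype ι] [MeasurableSpace Ω]
    (μ : Measure Ω) {E : ι → Set Ω} [∀ ω, DecidablePred (ω ∈ E ·)]
    (hE : ∀ j, MeasurableSet (E j)) {m : ℕ}
    (hcard : ∀ ω, #{j | ω ∈ E j} ≤ m) : ∑ j, μ (E j) ≤ m * μ Set.univ :=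
  calc ∑ j, μ (E j) = ∫⁻ ω, ∑ j, (E j).indicator 1 ω ∂μ := by
        rw [lintegral_finsetSum _ fun j _ => measurable_one.indicator (hE j)]
        simp only [lintegral_indicator_one (hE _)]
    _ ≤ ∫⁻ _, (m : ℝ≥0∞) ∂μ := lintegral_mono fun ω => by
        simpa only [Set.indicator_apply, Pi.one_apply, sum_boole] using
          Nat.cast_le.mpr (hcard ω)
    _ = m * μ Set.univ := lintegral_const _

theorem measure_setOf_rankCount_le_eq_of_exchangeable {ι α Ω : Type*} [Fintype ι]
    [LinearOrder α] [MeasurableSpace α] [TopologicalSpace α]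
    [OpensMeasurableSpace α] [OrderClosedTopology α] [SecondCountableTopology α]
    [MeasurableSpace Ω] (P : Measure Ω) {R : ι → Ω → α} (hmeas : ∀ i, Measurable (R i))
    (hexch : ∀ σ : Equiv.Perm ι,
      Measure.map (fun ω i => R (σ i) ω) P = Measure.map (fun ω i => R i ω) P)
    (j k : ι) (m : ℕ) :
    P {ω | rankCount (fun i => R i ω) j ≤ m} = P {ω | rankCount (fun i => R i ω) k ≤ m} := by
  classical
  let σ := Equiv.swap k j
  have hpre : (fun ω i => R (σ i) ω) ⁻¹' {x | rankCount x k ≤ m}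
      = {ω | rankCount (fun i => R i ω) j ≤ m} := by
    ext ω
    simp only [Set.mem_preimage, Set.mem_ofPred_eq]
    rw [show (fun i => R (σ i) ω) = (fun i => R i ω) ∘ σ from rfl, rankCount_comp_perm,
      Equiv.swap_apply_left]
  have hB := measurableSet_setOf_rankCount_le (α := α) k m
  rw [← hpre, ← Measure.map_apply (measurable_pi_lambda _ fun i => hmeas (σ i)) hB, hexch,
    Measure.map_apply (measurable_pi_lambda _ hmeas) hB]
  rfl

theorem upper_p_value_test_conservative_general
    {Ω : Type*} [MeasurableSpace Ω] (P : Measure Ω) [IsProbabilityMeasure P]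
    (s : ℕ) (R : Fin (s + 1) → Ω → ℝ)
    (hmeas : ∀ i, Measurable (R i))
    (hexch : ∀ σ : Equiv.Perm (Fin (s + 1)),
      Measure.map (fun ω (i : Fin (s + 1)) => R (σ i) ω) P =
        Measure.map (fun ω (i : Fin (s + 1)) => R i ω) P)
    (m : ℕ) :
    P {ω | {i : Fin (s + 1) | R i ω ≤ R 0 ω}.ncard ≤ m} ≤ (m : ℝ≥0∞) / (s + 1) := by
  let E j := {ω | rankCount (fun i => R i ω) j ≤ m}
  have hgoal : {ω | {i : Fin (s + 1) | R i ω ≤ R 0 ω}.ncard ≤ m} = E 0 := by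
    ext ω
    simp only [E, rankCount, Set.mem_ofPred_eq, Set.ncard_eq_toFinset_card', Set.toFinset_ofPred]
  have hE j : MeasurableSet (E j) :=
    measurable_pi_lambda _ hmeas (measurableSet_setOf_rankCount_le j m)
  have hsum := sum_measure_le_of_forall_card_le P hE fun ω => card_rankCount_le_le _ m
  simp only [E, measure_setOf_rankCount_le_eq_of_exchangeable P hmeas hexch _ 0, sum_const,
    card_univ, Fintype.card_fin, nsmul_eq_mul, measure_univ, mul_one] at hsum
  rw [hgoal, ENNReal.le_div_iff_mul_le (Or.inl (by simp)) (Or.inl (by simp)), mul_comm]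
  exact_mod_cast hsum

/-- **Conservativeness of the test based on the upper p-value.**
Let `s ≥ 1` and let `R 0, …, R s` (i.e. `R_1, …, R_{s+1}`) be exchangeable real-valued
random variables (ties permitted), and let `m` be any natural number. Then
`P(#{i : R i ≤ R 0} ≤ m) ≤ m/(s+1)`. In particular, if `α(s+1) = m` is an integer, the
test `φ_cons = 1(p_+ ≤ α)`, where `p_+ = #{i : R i ≤ R 0}/(s+1)`, rejects with
probability at most `α` under the null hypothesis. -/
theorem upper_p_value_test_conservative
    {Ω : Type*} [MeasurableSpace Ω] (P : Measure Ω) [IsProbabilityMeasure P]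
    (s : ℕ) (hs : 1 ≤ s) (R : Fin (s + 1) → Ω → ℝ)
    (hmeas : ∀ i, Measurable (R i))
    (hexch : ∀ σ : Equiv.Perm (Fin (s + 1)),
      Measure.map (fun ω (i : Fin (s + 1)) => R (σ i) ω) P =
        Measure.map (fun ω (i : Fin (s + 1)) => R i ω) P)
    (m : ℕ) :
    P {ω | {i : Fin (s + 1) | R i ω ≤ R 0 ω}.ncard ≤ m} ≤ (m : ℝ≥0∞) / (s + 1) :=
  upper_p_value_test_conservative_general P s R hmeas hexch m
end

section
/- (Envelope characterization of the extreme rank.) For every i ∈ {1, …, s+1}, the extreme rank satisfies R_i = max{k ≥ 1 : T_low^(k)(r) ≤ T_i(r) ≤ T_upp^(k)(r) for all r ∈ I}, i.e., R_i is the largest k for which the curve T_i lies entirely within the k-th envelope. -/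
/-!
Without ties, the `m`-th element (from `0`) of the sorted list of values at `r` has exactly `m`
values strictly below it. Counting therefore shows that the `k`-th smallest value is at most
`T_i(r)` iff `k ≤ R_i^↑(r)`, and that the `k`-th largest is at least `T_i(r)` iff `k ≤ R_i^↓(r)`.
So `T_i` stays in the `k`-th envelope iff `k ≤ R_i^*(r)` for every `r`, i.e. iff `k ≤ R_i`, and the
admissible `k` form the interval `[1, R_i]`.
-/

open Finset

/-- The upward pointwise rank `R_i^↑(r) = #{j : T_j(r) ≤ T_i(r)}`. -/
noncomputable def upRank {s : ℕ} {ι : Type*} (T : Fin (s + 1) → ι → ℝ) (i : Fin (s + 1)) (r : ι) : ℕ :=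
  {j : Fin (s + 1) | T j r ≤ T i r}.ncard

/-- The downward pointwise rank `R_i^↓(r) = #{j : T_j(r) ≥ T_i(r)}`. -/
noncomputable def downRank {s : ℕ} {ι : Type*} (T : Fin (s + 1) → ι → ℝ) (i : Fin (s + 1)) (r : ι) : ℕ :=
  {j : Fin (s + 1) | T i r ≤ T j r}.ncard

/-- The two-sided pointwise rank `R_i^*(r) = min(R_i^↑(r), R_i^↓(r))`. -/
noncomputable def twoSidedRank {s : ℕ} {ι : Type*} (T : Fin (s + 1) → ι → ℝ) (i : Fin (s + 1)) (r : ι) : ℕ :=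
  min (upRank T i r) (downRank T i r)

/-- The extreme rank `R_i = min_{r ∈ I} R_i^*(r)`. -/
noncomputable def extremeRank {s : ℕ} {ι : Type*} [Fintype ι] [Nonempty ι]
    (T : Fin (s + 1) → ι → ℝ) (i : Fin (s + 1)) : ℕ :=
  univ.inf' univ_nonempty (fun r => twoSidedRank T i r)

/-- The lower bound of the `k`-th envelope: the `k`-th smallest of `T_1(r), …, T_{s+1}(r)`. -/
noncomputable def envLow {s : ℕ} {ι : Type*} (T : Fin (s + 1) → ι → ℝ) (k : ℕ) (r : ι) : ℝ :=
  ((univ.image (fun i => T i r)).sort (· ≤ ·)).getD (k - 1) 0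

/-- The upper bound of the `k`-th envelope: the `k`-th largest of `T_1(r), …, T_{s+1}(r)`. -/
noncomputable def envUpp {s : ℕ} {ι : Type*} (T : Fin (s + 1) → ι → ℝ) (k : ℕ) (r : ι) : ℝ :=
  ((univ.image (fun i => T i r)).sort (· ≤ ·)).getD (s + 1 - k) 0

namespace Finset

variable {α : Type*} [LinearOrder α]

theorem card_filter_lt_sort_getElem (S : Finset α) {m : ℕ} (hm : m < S.sort.length) :
    #{y ∈ S | y < S.sort[m]} = m := by
  set e := S.orderEmbOfFin rfl
  have he : S.sort[m] = e ⟨m, by simpa using hm⟩ := by simp [e, orderEmbOfFin_apply]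
  have hS : S = univ.map e.toEmbedding := (S.map_orderEmbOfFin_univ rfl).symm
  rw [he, congrArg (filter (· < e _)) hS, filter_map, card_map]
  simp only [Function.comp_def, RelEmbedding.coe_toEmbedding, e.lt_iff_lt]
  rw [filter_gt_eq_Iio, Fin.card_Iio]

theorem le_iff_card_filter_lt_lt_card_filter_le {S : Finset α} {y : α} (hy : y ∈ S) (x : α) :
    y ≤ x ↔ #{z ∈ S | z < y} < #{z ∈ S | z ≤ x} := by
  constructor
  · intro hyx
    refine card_lt_card ((ssubset_iff_of_subset ?_).2 ⟨y, ?_, ?_⟩)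
    · exact monotone_filter_right S fun z _ hz => hz.le.trans hyx
    · simp [hy, hyx]
    · simp
  · intro h
    by_contra! hxy
    exact (card_le_card (monotone_filter_right S fun z _ hz => hz.trans_lt hxy)).not_gt h

theorem lt_iff_card_filter_lt_lt_card_filter_lt {S : Finset α} {y : α} (hy : y ∈ S) (x : α) :
    y < x ↔ #{z ∈ S | z < y} < #{z ∈ S | z < x} := by
  constructor
  · intro hyx
    refine card_lt_card ((ssubset_iff_of_subset ?_).2 ⟨y, ?_, ?_⟩)
    · exact monotone_filter_right S fun z _ hz => hz.trans hyx
    · simp [hy, hyx]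
    · simp
  · intro h
    by_contra! hxy
    exact (card_le_card (monotone_filter_right S fun z _ hz => hz.trans_le hxy)).not_gt h

theorem sort_getElem_le_iff (S : Finset α) {m : ℕ} (hm : m < S.sort.length) (x : α) :
    S.sort[m] ≤ x ↔ m < #{y ∈ S | y ≤ x} := by
  rw [le_iff_card_filter_lt_lt_card_filter_le ((mem_sort _).1 (List.getElem_mem hm)),
    card_filter_lt_sort_getElem]

theorem le_sort_getElem_iff (S : Finset α) {m : ℕ} (hm : m < S.sort.length) (x : α) :
    x ≤ S.sort[m] ↔ #S - m ≤ #{y ∈ S | x ≤ y} := by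
  have hlt := lt_iff_card_filter_lt_lt_card_filter_lt ((mem_sort _).1 (List.getElem_mem hm)) x
  have hsplit := card_filter_add_card_filter_not (s := S) (· < x)
  rw [card_filter_lt_sort_getElem] at hlt
  rw [length_sort] at hm
  simp only [not_lt] at hsplit
  rw [← not_lt, hlt]
  omega

theorem ncard_setOf_comp_eq_card_filter_image {β γ : Type*} [Fintype β] [DecidableEq γ]
    {f : β → γ} (hf : Function.Injective f) (p : γ → Prop) [DecidablePred p] :
    {j | p (f j)}.ncard = #{y ∈ univ.image f | p y} := by
  rw [filter_image, card_image_of_injective _ hf, ← Set.ncard_coe_finset, coe_filter]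
  simp

end Finset

section Envelope

variable {s : ℕ} {ι : Type*} (T : Fin (s + 1) → ι → ℝ) (i : Fin (s + 1)) (r : ι)

theorem one_le_twoSidedRank : 1 ≤ twoSidedRank T i r := by
  refine le_min ?_ ?_ <;>
    exact (Set.ncard_pos (Set.toFinite _)).2 ⟨i, le_refl (T i r)⟩

theorem twoSidedRank_le : twoSidedRank T i r ≤ s + 1 :=
  calc twoSidedRank T i r ≤ upRank T i r := min_le_left _ _
    _ ≤ Nat.card (Fin (s + 1)) := Set.ncard_le_card _
    _ = s + 1 := Nat.card_fin _

variable {T}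

theorem card_univ_image_eq_of_injective (hT : Function.Injective (T · r)) :
    #(univ.image (T · r)) = s + 1 := by
  rw [card_image_of_injective _ hT, card_fin]

theorem envLow_le_iff (hT : Function.Injective (T · r)) {k : ℕ} (hk₁ : 1 ≤ k) (hk₂ : k ≤ s + 1) :
    envLow T k r ≤ T i r ↔ k ≤ upRank T i r := by
  have hlen := card_univ_image_eq_of_injective r hT
  rw [envLow, List.getD_eq_getElem _ _ (by rw [length_sort]; omega), sort_getElem_le_iff, upRank,
    ncard_setOf_comp_eq_card_filter_image hT (· ≤ T i r)]
  omega

theorem le_envUpp_iff (hT : Function.Injective (T · r)) {k : ℕ} (hk₁ : 1 ≤ k) (hk₂ : k ≤ s + 1) :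
    T i r ≤ envUpp T k r ↔ k ≤ downRank T i r := by
  have hlen := card_univ_image_eq_of_injective r hT
  rw [envUpp, List.getD_eq_getElem _ _ (by rw [length_sort]; omega), le_sort_getElem_iff, downRank,
    ncard_setOf_comp_eq_card_filter_image hT (T i r ≤ ·), hlen]
  omega

end Envelope

section ExtremeRank

variable {s : ℕ} {ι : Type*} [Fintype ι] [Nonempty ι] (T : Fin (s + 1) → ι → ℝ) (i : Fin (s + 1))

theorem one_le_extremeRank : 1 ≤ extremeRank T i :=
  le_inf' _ _ fun r _ => one_le_twoSidedRank T i r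

theorem extremeRank_le : extremeRank T i ≤ s + 1 :=
  (inf'_le _ (mem_univ (Classical.arbitrary ι))).trans (twoSidedRank_le T i _)

variable {T} in
theorem forall_mem_envelope_iff_le_extremeRank (hT : ∀ r, Function.Injective (T · r))
    {k : ℕ} (hk₁ : 1 ≤ k) (hk₂ : k ≤ s + 1) :
    (∀ r, envLow T k r ≤ T i r ∧ T i r ≤ envUpp T k r) ↔ k ≤ extremeRank T i := by
  simp only [extremeRank, le_inf'_iff, mem_univ, true_imp_iff, twoSidedRank, le_min_iff,
    envLow_le_iff i _ (hT _) hk₁ hk₂, le_envUpp_iff i _ (hT _) hk₁ hk₂]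

end ExtremeRank

theorem extremeRank_eq_max_envelope_general
    {s : ℕ} {ι : Type*} [Fintype ι] [Nonempty ι]
    (T : Fin (s + 1) → ι → ℝ)
    (hnoties : ∀ r : ι, ∀ i j : Fin (s + 1), i ≠ j → T i r ≠ T j r)
    (i : Fin (s + 1)) :
    extremeRank T i =
      sSup {k : ℕ | 1 ≤ k ∧ k ≤ s + 1 ∧
        ∀ r : ι, envLow T k r ≤ T i r ∧ T i r ≤ envUpp T k r} := by
  have hT : ∀ r, Function.Injective (T · r) := fun r a b => not_imp_not.1 (hnoties r a b)
  have hE := extremeRank_le T i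
  suffices {k : ℕ | 1 ≤ k ∧ k ≤ s + 1 ∧ ∀ r : ι, envLow T k r ≤ T i r ∧ T i r ≤ envUpp T k r} =
      Set.Icc 1 (extremeRank T i) by
    rw [this, csSup_Icc (one_le_extremeRank T i)]
  ext k
  constructor
  · rintro ⟨hk₁, hk₂, hk⟩
    exact ⟨hk₁, (forall_mem_envelope_iff_le_extremeRank i hT hk₁ hk₂).1 hk⟩
  · rintro ⟨hk₁, hk⟩
    exact ⟨hk₁, hk.trans hE, (forall_mem_envelope_iff_le_extremeRank i hT hk₁ (hk.trans hE)).2 hk⟩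

/-- **Envelope characterization of the extreme rank.**
For curves `T_1, …, T_{s+1}` on a nonempty finite set `I` with no pointwise ties, the
extreme rank satisfies `R_i = max{k ≥ 1 : T_low^(k)(r) ≤ T_i(r) ≤ T_upp^(k)(r) ∀ r ∈ I}`,
i.e. `R_i` is the largest `k` for which the curve `T_i` lies entirely within the `k`-th
envelope (the `k`-th envelope being defined for `1 ≤ k ≤ s+1`). -/
theorem extremeRank_eq_max_envelope
    {s : ℕ} (hs : 1 ≤ s) {ι : Type*} [Fintype ι] [Nonempty ι]
    (T : Fin (s + 1) → ι → ℝ)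
    (hnoties : ∀ r : ι, ∀ i j : Fin (s + 1), i ≠ j → T i r ≠ T j r)
    (i : Fin (s + 1)) :
    extremeRank T i =
      sSup {k : ℕ | 1 ≤ k ∧ k ≤ s + 1 ∧
        ∀ r : ι, envLow T k r ≤ T i r ∧ T i r ≤ envUpp T k r} :=
  extremeRank_eq_max_envelope_general T hnoties i
end

section
/- (Equivalence of the studentized MAD deviation test and the studentized MAD envelope test.) Let s ≥ 1, let I be a nonempty finite set, let T_1, …, T_{s+1} : I → ℝ, let T_0 : I → ℝ, and let σ : I → ℝ with σ(r) > 0 for all r. Define the studentized maximum absolute deviations u_i = max_{r ∈ I} |T_i(r) − T_0(r)|/σ(r), assume u_1, …, u_{s+1} are pairwise distinct, let m be an integer with 1 ≤ m ≤ s+1, and let u_α be the m-th largest value among u_1, …, u_{s+1}. Then #{i ∈ {1, …, s+1} : u_i ≥ u_1} ≤ m if and only if there exists r ∈ I with T_1(r) ≤ T_0(r) − u_α·σ(r) or T_1(r) ≥ T_0(r) + u_α·σ(r); i.e., the deviation test based on u rejects exactly when the observed curve exits the studentized envelope with bounds T_0(r) ± u_α·σ(r). -/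
open Finset

/-! Both sides compare `uα` with `u 0`. The curve `T 0` leaves the envelope at `r` exactly when
`uα ≤ |T 0 r - T₀ r| / σ r`, so it leaves it somewhere iff `uα ≤ u 0`. As the `u i` are distinct,
exactly `m` of them are `≥ uα`; hence at most `m` of them are `≥ u 0` iff `u 0` is not below `uα`. -/

theorem Finset.card_filter_sort_getD_le {α : Type*} [LinearOrder α] (A : Finset α) {k : ℕ}
    (hk : k < #A) (d : α) :
    #{x ∈ A | (A.sort (· ≤ ·)).getD k d ≤ x} = #A - k := by
  set e := A.orderEmbOfFin rfl
  have hkth : (A.sort (· ≤ ·)).getD k d = e ⟨k, hk⟩ := by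
    rw [List.getD_eq_getElem _ _ (by simpa using hk)]
    rfl
  have hfilter : {x ∈ A | e ⟨k, hk⟩ ≤ x} = (Ici ⟨k, hk⟩).map e.toEmbedding := by
    ext x
    simp only [mem_filter, mem_map, mem_Ici, RelEmbedding.coe_toEmbedding]
    constructor
    · rintro ⟨hx, hkx⟩
      obtain ⟨i, rfl⟩ : x ∈ Set.range e := by rwa [range_orderEmbOfFin]
      exact ⟨i, e.le_iff_le.1 hkx, rfl⟩
    · rintro ⟨i, hi, rfl⟩
      exact ⟨orderEmbOfFin_mem A rfl i, e.monotone hi⟩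
  rw [hkth, hfilter, card_map, Fin.card_Ici]

theorem card_filter_sort_image_getD_le {β α : Type*} [Fintype β] [LinearOrder α] {f : β → α}
    (hf : Function.Injective f) {k : ℕ} (hk : k < Fintype.card β) (d : α) :
    #{i | ((univ.image f).sort (· ≤ ·)).getD k d ≤ f i} = Fintype.card β - k := by
  have hcard : #(univ.image f) = Fintype.card β := card_image_of_injective _ hf
  rw [← card_image_of_injective _ hf, ← filter_image, ← hcard]
  exact (univ.image f).card_filter_sort_getD_le (hcard ▸ hk) d

theorem card_filter_le_apply_le_iff {β α : Type*} [Fintype β] [LinearOrder α] {f : β → α}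
    {c : α} {m : ℕ} (hc : #{i | c ≤ f i} = m) (i₀ : β) :
    #{i | f i₀ ≤ f i} ≤ m ↔ c ≤ f i₀ := by
  refine ⟨fun h => ?_, fun h => hc ▸ card_le_card fun i hi => ?_⟩
  · by_contra! hlt
    have hssub : ({i | c ≤ f i} : Finset β) ⊂ ({i | f i₀ ≤ f i} : Finset β) := by
      refine (ssubset_iff_of_subset fun i hi => ?_).2 ⟨i₀, by simp, by simpa using hlt⟩
      simp only [mem_filter, mem_univ, true_and] at hi ⊢
      exact hlt.le.trans hi
    exact (hc ▸ card_lt_card hssub).not_ge h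
  · simp only [mem_filter, mem_univ, true_and] at hi ⊢
    exact h.trans hi

theorem le_abs_sub_div_iff {x y c σ : ℝ} (hσ : 0 < σ) :
    c ≤ |x - y| / σ ↔ x ≤ y - c * σ ∨ y + c * σ ≤ x := by
  rw [le_div_iff₀ hσ, le_abs, or_comm]
  constructor <;> rintro (h | h) <;> [left; right; left; right] <;> linarith

theorem le_sup'_abs_sub_div_iff {ι : Type*} {s : Finset ι} (hs : s.Nonempty) {t t₀ σ : ι → ℝ}
    (hσ : ∀ r ∈ s, 0 < σ r) {c : ℝ} :
    c ≤ s.sup' hs (fun r => |t r - t₀ r| / σ r) ↔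
      ∃ r ∈ s, t r ≤ t₀ r - c * σ r ∨ t₀ r + c * σ r ≤ t r := by
  rw [le_sup'_iff]
  exact exists_congr fun r => and_congr_right fun hr => le_abs_sub_div_iff (hσ r hr)

theorem studentized_MAD_deviation_iff_envelope_general
    {s : ℕ} {ι : Type*} [Fintype ι] [Nonempty ι]
    (T : Fin (s + 1) → ι → ℝ) (T₀ : ι → ℝ) (σ : ι → ℝ) (hσ : ∀ r, 0 < σ r)
    (u : Fin (s + 1) → ℝ)
    (hu : ∀ i, u i = univ.sup' univ_nonempty (fun r => |T i r - T₀ r| / σ r))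
    (hdistinct : ∀ i j : Fin (s + 1), i ≠ j → u i ≠ u j)
    (m : ℕ) (hm1 : 1 ≤ m) (hm2 : m ≤ s + 1)
    (uα : ℝ) (huα : uα = ((univ.image u).sort (· ≤ ·)).getD (s + 1 - m) 0) :
    {i : Fin (s + 1) | u 0 ≤ u i}.ncard ≤ m ↔
      ∃ r : ι, T 0 r ≤ T₀ r - uα * σ r ∨ T₀ r + uα * σ r ≤ T 0 r := by
  have hu_inj : Function.Injective u := fun i j h => by_contra fun hne => hdistinct i j hne h
  have hcount : #{i | uα ≤ u i} = m := by
    rw [huα, card_filter_sort_image_getD_le hu_inj (by rw [Fintype.card_fin]; omega),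
      Fintype.card_fin]
    omega
  rw [Set.ncard_eq_toFinset_card', Set.toFinset_ofPred, card_filter_le_apply_le_iff hcount, hu 0,
    le_sup'_abs_sub_div_iff _ fun r _ => hσ r]
  simp only [mem_univ, true_and]

/-- **Equivalence of the studentized MAD deviation test and the studentized MAD
envelope test.** Let `s ≥ 1`, `I` a nonempty finite set, `T_1, …, T_{s+1} : I → ℝ`,
`T_0 : I → ℝ`, and `σ : I → ℝ` with `σ(r) > 0` for all `r`. Define the studentized
maximum absolute deviations `u_i = max_{r ∈ I} |T_i(r) − T_0(r)|/σ(r)`, assume the `u_i`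
are pairwise distinct, let `1 ≤ m ≤ s+1` and let `u_α` be the `m`-th largest value among
`u_1, …, u_{s+1}`. Then `#{i : u_i ≥ u_1} ≤ m` iff there exists `r ∈ I` with
`T_1(r) ≤ T_0(r) − u_α·σ(r)` or `T_1(r) ≥ T_0(r) + u_α·σ(r)`. -/
theorem studentized_MAD_deviation_iff_envelope
    {s : ℕ} (hs : 1 ≤ s) {ι : Type*} [Fintype ι] [Nonempty ι]
    (T : Fin (s + 1) → ι → ℝ) (T₀ : ι → ℝ) (σ : ι → ℝ) (hσ : ∀ r, 0 < σ r)
    (u : Fin (s + 1) → ℝ)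
    (hu : ∀ i, u i = univ.sup' univ_nonempty (fun r => |T i r - T₀ r| / σ r))
    (hdistinct : ∀ i j : Fin (s + 1), i ≠ j → u i ≠ u j)
    (m : ℕ) (hm1 : 1 ≤ m) (hm2 : m ≤ s + 1)
    (uα : ℝ) (huα : uα = ((univ.image u).sort (· ≤ ·)).getD (s + 1 - m) 0) :
    {i : Fin (s + 1) | u 0 ≤ u i}.ncard ≤ m ↔
      ∃ r : ι, T 0 r ≤ T₀ r - uα * σ r ∨ T₀ r + uα * σ r ≤ T 0 r :=
  studentized_MAD_deviation_iff_envelope_general T T₀ σ hσ u hu hdistinct m hm1 hm2 uα huα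
end

section
/- (Equivalence of the directional quantile MAD deviation test and the directional quantile MAD envelope test.) Let s ≥ 1, let I be a nonempty finite set, let T_1, …, T_{s+1} : I → ℝ, let T_0 : I → ℝ, and let a, b : I → ℝ with a(r) > 0 and b(r) > 0 for all r. Define the directional quantile deviations u_i = max_{r ∈ I} d_i(r), where d_i(r) = (T_i(r) − T_0(r))/a(r) if T_i(r) ≥ T_0(r) and d_i(r) = (T_0(r) − T_i(r))/b(r) if T_i(r) < T_0(r) (so d_i(r) ≥ 0 and the deviation is scaled by the upper quantile distance above T_0 and by the lower quantile distance below T_0). Assume u_1, …, u_{s+1} are pairwise distinct, let m be an integer with 1 ≤ m ≤ s+1, and let u_α be the m-th largest value among u_1, …, u_{s+1}. Then #{i ∈ {1, …, s+1} : u_i ≥ u_1} ≤ m if and only if there exists r ∈ I with T_1(r) ≤ T_0(r) − u_α·b(r) or T_1(r) ≥ T_0(r) + u_α·a(r); i.e., the deviation test based on u rejects exactly when the observed curve exits the directional quantile envelope with lower bound T_0(r) − u_α·b(r) and upper bound T_0(r) + u_α·a(r). -/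
/-!
Leaving the envelope at `r` means exactly `d₁(r) ≥ u_α`, so the envelope test rejects iff
`u₁ ≥ u_α`. Since the `u_i` are distinct, `u₁` is at least the `m`-th largest of them iff at
most `m` of them are `≥ u₁`.
-/

open Finset

section Rank

variable {α : Type*} [LinearOrder α]

theorem Finset.card_filter_orderEmbOfFin_le (S : Finset α) {n : ℕ} (h : #S = n) (j : Fin n) :
    #{x ∈ S | S.orderEmbOfFin h j ≤ x} = n - j := by
  have hfilter :
      {x ∈ S | S.orderEmbOfFin h j ≤ x} = (Ici j).map (S.orderEmbOfFin h).toEmbedding := by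
    ext x
    simp only [mem_filter, mem_map, mem_Ici, RelEmbedding.coe_toEmbedding]
    constructor
    · rintro ⟨hxS, hjx⟩
      obtain ⟨i, rfl⟩ : x ∈ Set.range (S.orderEmbOfFin h) := by
        rw [range_orderEmbOfFin]; exact hxS
      exact ⟨i, (S.orderEmbOfFin h).le_iff_le.1 hjx, rfl⟩
    · rintro ⟨i, hji, rfl⟩
      exact ⟨orderEmbOfFin_mem S h i, (S.orderEmbOfFin h).monotone hji⟩
  rw [hfilter, card_map, Fin.card_Ici]

theorem Finset.card_filter_le_le_iff_sort_getD_le (S : Finset α) {x : α} (hx : x ∈ S)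
    {m : ℕ} (hm : 1 ≤ m) (default : α) :
    #{y ∈ S | x ≤ y} ≤ m ↔ (S.sort (· ≤ ·)).getD (#S - m) default ≤ x := by
  set e := S.orderEmbOfFin rfl
  obtain ⟨j, rfl⟩ : x ∈ Set.range e := by rw [range_orderEmbOfFin]; exact hx
  have hk : #S - m < #S := by have := j.2; omega
  have hgetD : (S.sort (· ≤ ·)).getD (#S - m) default = e ⟨#S - m, hk⟩ := by
    rw [List.getD_eq_getElem _ _ (by rwa [length_sort]), orderEmbOfFin_apply]
    rfl
  rw [hgetD, card_filter_orderEmbOfFin_le, e.le_iff_le]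
  change _ ↔ #S - m ≤ (j : ℕ)
  omega

end Rank

-- No sign condition on `t` is needed: for `t < 0` both sides hold.
theorem exits_envelope_iff_le_ite_div {x x₀ a b t : ℝ} (ha : 0 < a) (hb : 0 < b) :
    (x ≤ x₀ - t * b ∨ x₀ + t * a ≤ x) ↔
      t ≤ if x₀ ≤ x then (x - x₀) / a else (x₀ - x) / b := by
  split_ifs with h
  · rw [le_div_iff₀ ha]
    constructor
    · rintro (hlow | hup)
      · nlinarith
      · linarith
    · intro ht; right; linarith
  · rw [le_div_iff₀ hb]
    constructor
    · rintro (hlow | hup)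
      · linarith
      · nlinarith
    · intro ht; left; linarith

theorem directional_quantile_MAD_deviation_iff_envelope_general
    {s : ℕ} {ι : Type*} [Fintype ι] [Nonempty ι]
    (T : Fin (s + 1) → ι → ℝ) (T₀ : ι → ℝ) (a b : ι → ℝ)
    (ha : ∀ r, 0 < a r) (hb : ∀ r, 0 < b r)
    (d : Fin (s + 1) → ι → ℝ)
    (hd : ∀ i r, d i r =
      if T₀ r ≤ T i r then (T i r - T₀ r) / a r else (T₀ r - T i r) / b r)
    (u : Fin (s + 1) → ℝ)
    (hu : ∀ i, u i = univ.sup' univ_nonempty (fun r => d i r))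
    (hdistinct : ∀ i j : Fin (s + 1), i ≠ j → u i ≠ u j)
    (m : ℕ) (hm1 : 1 ≤ m)
    (uα : ℝ) (huα : uα = ((univ.image u).sort (· ≤ ·)).getD (s + 1 - m) 0) :
    {i : Fin (s + 1) | u 0 ≤ u i}.ncard ≤ m ↔
      ∃ r : ι, T 0 r ≤ T₀ r - uα * b r ∨ T₀ r + uα * a r ≤ T 0 r := by
  have hinj : Function.Injective u := fun i j hij =>
    by_contra fun hne => hdistinct i j hne hij
  have hcard : #(univ.image u) = s + 1 := by
    rw [card_image_of_injective _ hinj, card_univ, Fintype.card_fin]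
  have hcount : {i | u 0 ≤ u i}.ncard = #{y ∈ univ.image u | u 0 ≤ y} := by
    rw [filter_image, card_image_of_injective _ hinj, ← Set.ncard_coe_finset, coe_filter]
    simp only [mem_univ, true_and]
  simp_rw [exits_envelope_iff_le_ite_div (ha _) (hb _), ← hd]
  rw [hcount, card_filter_le_le_iff_sort_getD_le _ (mem_image_of_mem u (mem_univ 0)) hm1 0,
    hcard, ← huα, hu, le_sup'_iff]
  simp only [mem_univ, true_and]

/-- **Equivalence of the directional quantile MAD deviation test and the directional
quantile MAD envelope test.** Let `s ≥ 1`, `I` a nonempty finite set,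
`T_1, …, T_{s+1} : I → ℝ`, `T_0 : I → ℝ` and `a, b : I → ℝ` with `a(r), b(r) > 0`.
Define the directional quantile deviations `u_i = max_{r ∈ I} d_i(r)` where
`d_i(r) = (T_i(r) − T_0(r))/a(r)` if `T_i(r) ≥ T_0(r)` and
`d_i(r) = (T_0(r) − T_i(r))/b(r)` if `T_i(r) < T_0(r)`. Assume the `u_i` are pairwise
distinct, let `1 ≤ m ≤ s+1` and let `u_α` be the `m`-th largest value among
`u_1, …, u_{s+1}`. Then `#{i : u_i ≥ u_1} ≤ m` iff there exists `r ∈ I` with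
`T_1(r) ≤ T_0(r) − u_α·b(r)` or `T_1(r) ≥ T_0(r) + u_α·a(r)`. -/
theorem directional_quantile_MAD_deviation_iff_envelope
    {s : ℕ} (hs : 1 ≤ s) {ι : Type*} [Fintype ι] [Nonempty ι]
    (T : Fin (s + 1) → ι → ℝ) (T₀ : ι → ℝ) (a b : ι → ℝ)
    (ha : ∀ r, 0 < a r) (hb : ∀ r, 0 < b r)
    (d : Fin (s + 1) → ι → ℝ)
    (hd : ∀ i r, d i r =
      if T₀ r ≤ T i r then (T i r - T₀ r) / a r else (T₀ r - T i r) / b r)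
    (u : Fin (s + 1) → ℝ)
    (hu : ∀ i, u i = univ.sup' univ_nonempty (fun r => d i r))
    (hdistinct : ∀ i j : Fin (s + 1), i ≠ j → u i ≠ u j)
    (m : ℕ) (hm1 : 1 ≤ m) (hm2 : m ≤ s + 1)
    (uα : ℝ) (huα : uα = ((univ.image u).sort (· ≤ ·)).getD (s + 1 - m) 0) :
    {i : Fin (s + 1) | u 0 ≤ u i}.ncard ≤ m ↔
      ∃ r : ι, T 0 r ≤ T₀ r - uα * b r ∨ T₀ r + uα * a r ≤ T 0 r :=
  directional_quantile_MAD_deviation_iff_envelope_general T T₀ a b ha hb d hd u hu hdistinct m hm1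
    uα huα
end
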